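/- arXiv:2601.20735 — 7 statements merged into one kernel-verified Lean document; each statement's English description precedes it below -/
import Mathlib

section
/- Let P be a plain metric logic program over alphabet 𝒜, let λ ≥ 1, and let M = ((⟨T_i,T_i⟩)_{0≤i<λ}, τ) be a total timed HT-trace of length λ. If M is a metric equilibrium model of P, then θ(M) is an equilibrium model of Π_λ(P) ∪ Δ_{λ,ν} ∪ Ψ_{λ,ν}(P), where ν = τ(λ−1). -/
namespace MetricASP

/-- Metric intervals `[m..n)` with `n = none` standing for `ω`. -/
structure Interval : Type where
  m : ℕ
  n : Option ℕ

/-- `x ∈ [m..n)` iff `m ≤ x` and (`n = ω` or `x < n`). -/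
def Interval.mem (I : Interval) (x : ℕ) : Prop :=
  I.m ≤ x ∧ ∀ nn ∈ I.n, x < nn

/-- The interval `[0..ω)`. -/
def fullInterval : Interval := ⟨0, none⟩

/-- Metric formulas over an alphabet `α`. -/
inductive MF (α : Type) : Type
  | fls
  | atom (a : α)
  | conj (φ ψ : MF α)
  | disj (φ ψ : MF α)
  | impl (φ ψ : MF α)
  | init
  | next (I : Interval) (φ : MF α)
  | always (I : Interval) (φ : MF α)
  | evt (I : Interval) (φ : MF α)

def MF.neg {α : Type} (φ : MF α) : MF α := .impl φ .fls
def MF.top {α : Type} : MF α := MF.neg .fls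
def MF.fin {α : Type} : MF α := MF.neg (.next fullInterval MF.top)

/-- Timing function wrt `lam`. -/
def IsTiming (lam : ℕ) (τ : ℕ → ℕ) : Prop :=
  τ 0 = 0 ∧ ∀ k, k + 1 < lam → τ k < τ (k + 1)

/-- `H i ⊆ T i` for all relevant indices. -/
def IsTrace {α : Type} (lam : ℕ) (H T : ℕ → Set α) : Prop :=
  ∀ i, i < lam → H i ⊆ T i

/-- Satisfaction of a metric formula by a timed HT-trace of length `lam`. -/
def MSat {α : Type} (lam : ℕ) (τ : ℕ → ℕ) :
    (ℕ → Set α) → (ℕ → Set α) → ℕ → MF α → Prop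
  | _, _, _, .fls => False
  | H, _, k, .atom a => a ∈ H k
  | H, T, k, .conj φ ψ => MSat lam τ H T k φ ∧ MSat lam τ H T k ψ
  | H, T, k, .disj φ ψ => MSat lam τ H T k φ ∨ MSat lam τ H T k ψ
  | H, T, k, .impl φ ψ =>
      (MSat lam τ H T k φ → MSat lam τ H T k ψ) ∧
      (MSat lam τ T T k φ → MSat lam τ T T k ψ)
  | _, _, k, .init => k = 0
  | H, T, k, .next I φ =>
      k + 1 < lam ∧ MSat lam τ H T (k + 1) φ ∧ I.mem (τ (k + 1) - τ k)
  | H, T, k, .evt I φ =>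
      ∃ i, k ≤ i ∧ i < lam ∧ I.mem (τ i - τ k) ∧ MSat lam τ H T i φ
  | H, T, k, .always I φ =>
      ∀ i, k ≤ i → i < lam → I.mem (τ i - τ k) → MSat lam τ H T i φ

/-- MHT-model of a set of metric formulas. -/
def MHTModels {α : Type} (lam : ℕ) (τ : ℕ → ℕ) (H T : ℕ → Set α)
    (Γ : Set (MF α)) : Prop :=
  ∀ φ ∈ Γ, MSat lam τ H T 0 φ

/-- Metric equilibrium model (of the total trace given by `T` and `τ`). -/
def MetricEqModel {α : Type} (lam : ℕ) (τ : ℕ → ℕ) (T : ℕ → Set α)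
    (Γ : Set (MF α)) : Prop :=
  MHTModels lam τ T T Γ ∧
  ∀ H : ℕ → Set α, IsTrace lam H T → (∃ i, i < lam ∧ H i ≠ T i) →
    ¬ MHTModels lam τ H T Γ

/-- Propositional formulas over atoms `β`. -/
inductive PF (β : Type) : Type
  | fls
  | atom (a : β)
  | and (φ ψ : PF β)
  | or (φ ψ : PF β)
  | imp (φ ψ : PF β)

def PF.neg {β : Type} (φ : PF β) : PF β := .imp φ .fls
def PF.top {β : Type} : PF β := PF.neg .fls

def bigOr {β : Type} (l : List (PF β)) : PF β := l.foldr .or .fls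
def bigAnd {β : Type} (l : List (PF β)) : PF β := l.foldr .and PF.top

/-- Here-and-there satisfaction. -/
def HSat {β : Type} : Set β → Set β → PF β → Prop
  | _, _, .fls => False
  | H, _, .atom a => a ∈ H
  | H, T, .and φ ψ => HSat H T φ ∧ HSat H T ψ
  | H, T, .or φ ψ => HSat H T φ ∨ HSat H T ψ
  | H, T, .imp φ ψ => (HSat H T φ → HSat H T ψ) ∧ (HSat T T φ → HSat T T ψ)

def HTModels {β : Type} (H T : Set β) (Γ : Set (PF β)) : Prop :=
  ∀ φ ∈ Γ, HSat H T φ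

/-- `T` (as the total interpretation `⟨T,T⟩`) is an equilibrium model of `Γ`. -/
def EqModel {β : Type} (T : Set β) (Γ : Set (PF β)) : Prop :=
  HTModels T T Γ ∧ ∀ H : Set β, H ⊂ T → ¬ HTModels H T Γ

/-- Literals over atoms `β`. -/
inductive Lit (β : Type) : Type
  | pos (a : β)
  | neg (a : β)

/-- Body atoms: atoms of the alphabet, `𝗜`, or `𝗙`. -/
inductive BAt (α : Type) : Type
  | atm (a : α)
  | init
  | fin

/-- A plain metric rule: `□(α ← β)` or `□(◯_I a ← β)`. -/
inductive PlainRule (α : Type) : Type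
  | basic (head : List (Lit α)) (body : List (Lit (BAt α)))
  | nxt (I : Interval) (a : α) (body : List (Lit (BAt α)))

def litMF {α β : Type} (f : β → MF α) : Lit β → MF α
  | .pos a => f a
  | .neg a => MF.neg (f a)

def BAt.mf {α : Type} : BAt α → MF α
  | .atm a => .atom a
  | .init => .init
  | .fin => MF.fin

def headMF {α : Type} (l : List (Lit α)) : MF α :=
  (l.map (litMF MF.atom)).foldr .disj .fls

def bodyMF {α : Type} (l : List (Lit (BAt α))) : MF α :=
  (l.map (litMF BAt.mf)).foldr .conj MF.top

/-- The metric formula corresponding to a plain metric rule. -/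
def PlainRule.mf {α : Type} : PlainRule α → MF α
  | .basic h b => .always fullInterval (.impl (bodyMF b) (headMF h))
  | .nxt I a b => .always fullInterval (.impl (bodyMF b) (.next I (.atom a)))

/-- Atoms of the translated propositional language: `a_k` and `t_{k,d}`. -/
inductive XA (α : Type) : Type
  | av (a : α) (k : ℕ)
  | tv (k d : ℕ)

def sigLit {β γ : Type} (f : β → PF γ) : Lit β → PF γ
  | .pos a => f a
  | .neg a => PF.neg (f a)

def sigBAt {α : Type} (lam k : ℕ) : BAt α → PF (XA α)
  | .atm a => .atom (.av a k)
  | .init => if k = 0 then PF.top else .fls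
  | .fin => if k = lam - 1 then PF.top else .fls

def sigBody {α : Type} (lam k : ℕ) (b : List (Lit (BAt α))) : PF (XA α) :=
  (b.map (sigLit (sigBAt lam k))).foldr .and PF.top

def sigHead {α : Type} (k : ℕ) (h : List (Lit α)) : PF (XA α) :=
  (h.map (sigLit (fun a => PF.atom (XA.av a k)))).foldr .or .fls

/-- The translation `σ_k` of a plain metric rule. -/
def sigRule {α : Type} (lam k : ℕ) : PlainRule α → PF (XA α)
  | .basic h b => .imp (sigBody lam k b) (sigHead k h)
  | .nxt _ a b => .imp (sigBody lam k b)
      (if k = lam - 1 then .fls else .atom (.av a (k + 1)))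

/-- `Π_λ(P)`. -/
def PiTheory {α : Type} (lam : ℕ) (P : Set (PlainRule α)) : Set (PF (XA α)) :=
  {φ | ∃ r ∈ P, ∃ k, k < lam ∧ φ = sigRule lam k r}

/-- `Δ_{λ,ν}`. -/
def deltaTheory (α : Type) (lam ν : ℕ) : Set (PF (XA α)) :=
  insert (PF.atom (XA.tv 0 0))
    {φ | ∃ k d, k + 1 < lam ∧ d ≤ ν ∧
      φ = PF.imp (.atom (.tv k d))
        (bigOr (((List.range (ν + 1)).filter (fun d' => decide (d < d'))).map
          (fun d' => PF.atom (XA.tv (k + 1) d'))))}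

/-- `Ψ_{λ,ν}(P)`. -/
def psiTheory {α : Type} (lam ν : ℕ) (P : Set (PlainRule α)) : Set (PF (XA α)) :=
  {φ | ∃ I a b, PlainRule.nxt I a b ∈ P ∧ ∃ k d d', k + 1 < lam ∧ d < d' ∧ d' ≤ ν ∧
    (d' - d < I.m ∨ ∃ nn, I.n = some nn ∧ nn ≤ d' - d) ∧
    φ = PF.imp (.and (sigBody lam k b) (.and (.atom (.tv k d)) (.atom (.tv (k + 1) d')))) .fls}

/-- The `a_k`-part of `θ(M)` for one component of the trace. -/
def thetaAv {α : Type} (lam : ℕ) (S : ℕ → Set α) : Set (XA α) :=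
  {x | ∃ a k, k < lam ∧ a ∈ S k ∧ x = XA.av a k}

/-- The `t_{k,d}`-part `X` of `θ(M)`. -/
def thetaX (α : Type) (lam : ℕ) (τ : ℕ → ℕ) : Set (XA α) :=
  {x | ∃ k, k < lam ∧ x = XA.tv k (τ k)}

/-- One component of `θ(M)`: atoms from the trace component plus `X`. -/
def thetaHT {α : Type} (lam : ℕ) (τ : ℕ → ℕ) (S : ℕ → Set α) : Set (XA α) :=
  thetaAv lam S ∪ thetaX α lam τ

/-- `⟨H,T⟩` is timed wrt `lam`, with induced timing function `τ`. -/
def TimedHT {α : Type} (lam : ℕ) (H T : Set (XA α)) (τ : ℕ → ℕ) : Prop :=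
  IsTiming lam τ ∧
  ∀ k, k < lam → ∀ d, ((XA.tv k d ∈ H) ↔ τ k = d) ∧ ((XA.tv k d ∈ T) ↔ τ k = d)


/-!
`θ(M)` contains exactly one timing atom `t_{k,τ(k)}` per state, and `σ_k` evaluates bodies and
heads in `θ(M)` exactly as `M` does at state `k`. Hence `θ(M)` satisfies `Π_λ(P)`; it satisfies
`Δ_{λ,ν}` because `τ` increases up to `ν`, and `Ψ_{λ,ν}(P)` because `M` meets the interval
constraint of every next-rule whose body holds.

For minimality, let `⟨H, θ(M)⟩` be a model with `H ⊊ θ(M)`. The rules of `Δ_{λ,ν}` push some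
`t_{k+1,d'}` into `H`, and `H ⊆ θ(M)` leaves only `d' = τ(k+1)`; so `H` has all timing atoms and
misses some `a_k`. Reading `H` back as the trace `k ↦ {a | a_k ∈ H}` gives an MHT-model of `P`
strictly below `M` (`Π_λ(P)` yields the heads of next-rules, `Ψ_{λ,ν}(P)` their interval
constraints), contradicting metric equilibrium.
-/

section Semantics

variable {α β : Type}

lemma hsat_top (H T : Set β) : HSat H T PF.top := by
  simp [PF.top, PF.neg, HSat]

lemma msat_top (lam : ℕ) (τ : ℕ → ℕ) (H T : ℕ → Set α) (k : ℕ) :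
    MSat lam τ H T k MF.top := by
  simp [MF.top, MF.neg, MSat]

lemma hsat_imp_self (T : Set β) (φ ψ : PF β) :
    HSat T T (.imp φ ψ) ↔ (HSat T T φ → HSat T T ψ) := by
  simp [HSat]

lemma hsat_bigOr (H T : Set β) (l : List (PF β)) :
    HSat H T (bigOr l) ↔ ∃ φ ∈ l, HSat H T φ := by
  induction l with
  | nil => simp [bigOr, HSat]
  | cons φ l ih => simp only [bigOr, List.foldr] at ih ⊢; simp [HSat, ih]

lemma hsat_bigOr_tv_iff (H T : Set (XA α)) (k d ν : ℕ) :
    HSat H T (bigOr (((List.range (ν + 1)).filter (fun d' => decide (d < d'))).map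
        (fun d' => PF.atom (XA.tv (k + 1) d')))) ↔
      ∃ d', d < d' ∧ d' ≤ ν ∧ XA.tv (k + 1) d' ∈ H := by
  simp only [hsat_bigOr, List.mem_map, List.mem_filter, List.mem_range, decide_eq_true_eq]
  constructor
  · rintro ⟨_, ⟨d', ⟨hd'ν, hdd'⟩, rfl⟩, hd'⟩
    exact ⟨d', hdd', by omega, hd'⟩
  · rintro ⟨d', hdd', hd'ν, hd'⟩
    exact ⟨_, ⟨d', ⟨by omega, hdd'⟩, rfl⟩, hd'⟩

lemma fullInterval_mem (x : ℕ) : fullInterval.mem x :=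
  ⟨Nat.zero_le _, by simp [fullInterval]⟩

lemma Interval.not_mem_iff (I : Interval) (x : ℕ) :
    ¬ I.mem x ↔ x < I.m ∨ ∃ nn, I.n = some nn ∧ nn ≤ x := by
  cases h : I.n <;> simp [Interval.mem, h]
  omega

lemma msat_always_fullInterval {lam : ℕ} {τ : ℕ → ℕ} {H T : ℕ → Set α} {φ : MF α} :
    MSat lam τ H T 0 (.always fullInterval φ) ↔ ∀ k < lam, MSat lam τ H T k φ := by
  simp only [MSat, Nat.zero_le, fullInterval_mem, true_implies]

lemma msat_fin_iff {lam k : ℕ} (τ : ℕ → ℕ) (H T : ℕ → Set α) (hk : k < lam) :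
    MSat lam τ H T k MF.fin ↔ k = lam - 1 := by
  simp only [MF.fin, MF.neg, MSat, msat_top, fullInterval_mem, and_true, imp_false,
    and_self]
  omega

lemma IsTiming.strictMonoOn {lam : ℕ} {τ : ℕ → ℕ} (hτ : IsTiming lam τ) :
    StrictMonoOn τ (Set.Iic (lam - 1)) :=
  strictMonoOn_Iic_of_lt_succ fun m hm => hτ.2 m (by omega)

lemma IsTiming.le_last {lam k : ℕ} {τ : ℕ → ℕ} (hτ : IsTiming lam τ) (hk : k < lam) :
    τ k ≤ τ (lam - 1) :=
  hτ.strictMonoOn.monotoneOn (by simp; omega) (by simp) (by omega)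

end Semantics

section Theta

variable {α : Type} {lam k d : ℕ} {τ : ℕ → ℕ} {S : ℕ → Set α} {a : α}

lemma mem_thetaHT_av : XA.av a k ∈ thetaHT lam τ S ↔ k < lam ∧ a ∈ S k := by
  constructor
  · rintro (⟨a', k', hk', ha', h⟩ | ⟨k', _, h⟩) <;> cases h
    exact ⟨hk', ha'⟩
  · rintro ⟨hk, ha⟩
    exact Or.inl ⟨a, k, hk, ha, rfl⟩

lemma mem_thetaHT_tv : XA.tv k d ∈ thetaHT lam τ S ↔ k < lam ∧ τ k = d := by
  constructor
  · rintro (⟨a', k', _, _, h⟩ | ⟨k', hk', h⟩) <;> cases h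
    exact ⟨hk', rfl⟩
  · rintro ⟨hk, rfl⟩
    exact Or.inr ⟨k, hk, rfl⟩

lemma mem_iff_av_mem_thetaHT (hk : k < lam) (a : α) :
    a ∈ S k ↔ XA.av a k ∈ thetaHT lam τ S := by
  rw [mem_thetaHT_av, and_iff_right hk]

end Theta

section Translation

variable {α : Type} {lam k : ℕ} {τ : ℕ → ℕ} {Hs T : ℕ → Set α} {H Θ : Set (XA α)}

lemma msat_bAt_iff (hk : k < lam) (hH : ∀ a, a ∈ Hs k ↔ XA.av a k ∈ H) (b : BAt α) :
    MSat lam τ Hs T k b.mf ↔ HSat H Θ (sigBAt lam k b) := by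
  cases b with
  | atm a => exact hH a
  | init => by_cases h : k = 0 <;> simp [BAt.mf, sigBAt, MSat, HSat, h, hsat_top]
  | fin =>
    rw [show BAt.mf BAt.fin = (MF.fin : MF α) from rfl, msat_fin_iff τ Hs T hk]
    by_cases h : k = lam - 1 <;> simp [sigBAt, h, hsat_top, HSat]

lemma msat_bodyMF_iff (hk : k < lam) (hH : ∀ a, a ∈ Hs k ↔ XA.av a k ∈ H)
    (hT : ∀ a, a ∈ T k ↔ XA.av a k ∈ Θ) (b : List (Lit (BAt α))) :
    MSat lam τ Hs T k (bodyMF b) ↔ HSat H Θ (sigBody lam k b) := by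
  induction b with
  | nil => simp [bodyMF, sigBody, msat_top, hsat_top]
  | cons l b ih =>
    have hl : MSat lam τ Hs T k (litMF BAt.mf l) ↔ HSat H Θ (sigLit (sigBAt lam k) l) := by
      cases l with
      | pos c => exact msat_bAt_iff hk hH c
      | neg c =>
        simp only [litMF, sigLit, MF.neg, PF.neg, MSat, HSat, msat_bAt_iff (T := T) (Θ := Θ) hk hH c,
          msat_bAt_iff (T := T) (H := Θ) (Θ := Θ) hk hT c]
    simp only [bodyMF, sigBody, List.map_cons, List.foldr_cons] at ih ⊢
    exact and_congr hl ih

lemma msat_headMF_iff (hH : ∀ a, a ∈ Hs k ↔ XA.av a k ∈ H)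
    (hT : ∀ a, a ∈ T k ↔ XA.av a k ∈ Θ) (h : List (Lit α)) :
    MSat lam τ Hs T k (headMF h) ↔ HSat H Θ (sigHead k h) := by
  induction h with
  | nil => simp [headMF, sigHead, MSat, HSat]
  | cons l h ih =>
    have hl : MSat lam τ Hs T k (litMF MF.atom l) ↔
        HSat H Θ (sigLit (fun a => PF.atom (XA.av a k)) l) := by
      cases l with
      | pos c => exact hH c
      | neg c => simp only [litMF, sigLit, MF.neg, PF.neg, MSat, HSat, hH c, hT c]
    simp only [headMF, sigHead, List.map_cons, List.foldr_cons] at ih ⊢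
    exact or_congr hl ih

lemma msat_basic_iff (hk : k < lam) (hH : ∀ a, a ∈ Hs k ↔ XA.av a k ∈ H)
    (hT : ∀ a, a ∈ T k ↔ XA.av a k ∈ Θ) (h : List (Lit α)) (b : List (Lit (BAt α))) :
    MSat lam τ Hs T k (.impl (bodyMF b) (headMF h)) ↔
      HSat H Θ (sigRule lam k (.basic h b)) := by
  simp only [MSat, sigRule, HSat, msat_bodyMF_iff hk hH hT, msat_headMF_iff hH hT,
    msat_bodyMF_iff hk hT hT, msat_headMF_iff hT hT]

end Translation

section Equilibrium

variable {α : Type} {lam : ℕ} {τ : ℕ → ℕ} {T : ℕ → Set α} {P : Set (PlainRule α)}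

theorem htModels_piTheory (hM : MHTModels lam τ T T (PlainRule.mf '' P)) :
    HTModels (thetaHT lam τ T) (thetaHT lam τ T) (PiTheory lam P) := by
  rintro _ ⟨r, hr, k, hk, rfl⟩
  have hcorr := mem_iff_av_mem_thetaHT (τ := τ) (S := T) hk
  cases r with
  | basic h b =>
    exact (msat_basic_iff hk hcorr hcorr h b).1
      (msat_always_fullInterval.1 (hM _ ⟨_, hr, rfl⟩) k hk)
  | nxt I a b =>
    rw [sigRule, hsat_imp_self]
    intro hb
    obtain ⟨hk1, ha, -⟩ := (msat_always_fullInterval.1 (hM _ ⟨_, hr, rfl⟩) k hk).1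
      ((msat_bodyMF_iff hk hcorr hcorr b).2 hb)
    rw [if_neg (by omega)]
    exact mem_thetaHT_av.2 ⟨hk1, ha⟩

theorem htModels_deltaTheory (hlam : 1 ≤ lam) (hτ : IsTiming lam τ) :
    HTModels (thetaHT lam τ T) (thetaHT lam τ T) (deltaTheory α lam (τ (lam - 1))) := by
  rintro _ (rfl | ⟨k, d, hk1, -, rfl⟩)
  · exact mem_thetaHT_tv.2 ⟨hlam, hτ.1⟩
  · rw [hsat_imp_self, hsat_bigOr_tv_iff]
    intro htk
    obtain ⟨-, rfl⟩ := mem_thetaHT_tv.1 htk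
    exact ⟨τ (k + 1), hτ.2 k hk1, hτ.le_last hk1, mem_thetaHT_tv.2 ⟨hk1, rfl⟩⟩

theorem htModels_psiTheory (ν : ℕ) (hM : MHTModels lam τ T T (PlainRule.mf '' P)) :
    HTModels (thetaHT lam τ T) (thetaHT lam τ T) (psiTheory lam ν P) := by
  rintro _ ⟨I, a, b, hr, k, d, d', hk1, -, -, hbad, rfl⟩
  rw [hsat_imp_self]
  rintro ⟨hb, htk, htk1⟩
  obtain ⟨-, rfl⟩ := mem_thetaHT_tv.1 htk
  obtain ⟨-, rfl⟩ := mem_thetaHT_tv.1 htk1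
  have hcorr := mem_iff_av_mem_thetaHT (τ := τ) (S := T) (by omega : k < lam)
  obtain ⟨-, -, hI⟩ := (msat_always_fullInterval.1 (hM _ ⟨_, hr, rfl⟩) k (by omega)).1
    ((msat_bodyMF_iff (by omega) hcorr hcorr b).2 hb)
  exact (Interval.not_mem_iff _ _).2 hbad hI

theorem tv_mem_of_htModels_deltaTheory {H : Set (XA α)} (hτ : IsTiming lam τ)
    (hH : H ⊆ thetaHT lam τ T)
    (hDelta : HTModels H (thetaHT lam τ T) (deltaTheory α lam (τ (lam - 1)))) :
    ∀ k < lam, XA.tv k (τ k) ∈ H := by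
  intro k
  induction k with
  | zero =>
    intro _
    rw [hτ.1]
    exact hDelta _ (Set.mem_insert _ _)
  | succ k ih =>
    intro hk1
    have hstep := hDelta _ (Set.mem_insert_of_mem _ ⟨k, τ k, hk1, hτ.le_last (by omega), rfl⟩)
    obtain ⟨d', -, -, hd'⟩ := (hsat_bigOr_tv_iff _ _ _ _ _).1 (hstep.1 (ih (by omega)))
    obtain ⟨-, rfl⟩ := mem_thetaHT_tv.1 (hH hd')
    exact hd'

def avTrace (H : Set (XA α)) : ℕ → Set α := fun k => {a | XA.av a k ∈ H}

lemma isTrace_avTrace {H : Set (XA α)} (hH : H ⊆ thetaHT lam τ T) :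
    IsTrace lam (avTrace H) T :=
  fun _ _ _ ha => (mem_thetaHT_av.1 (hH ha)).2

lemma exists_avTrace_ne {H : Set (XA α)} (hH : H ⊂ thetaHT lam τ T)
    (htv : ∀ k < lam, XA.tv k (τ k) ∈ H) : ∃ k < lam, avTrace H k ≠ T k := by
  obtain ⟨x, hxθ, hxH⟩ := Set.exists_of_ssubset hH
  cases x with
  | tv k d =>
    obtain ⟨hk, rfl⟩ := mem_thetaHT_tv.1 hxθ
    exact absurd (htv k hk) hxH
  | av a k =>
    obtain ⟨hk, ha⟩ := mem_thetaHT_av.1 hxθ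
    exact ⟨k, hk, fun h => hxH (show a ∈ avTrace H k from h ▸ ha)⟩

lemma next_of_hsat_sigBody {H Θ : Set (XA α)} {k : ℕ} {I : Interval} {a : α}
    {b : List (Lit (BAt α))} (hτ : IsTiming lam τ) (hk : k < lam)
    (htv : ∀ j < lam, XA.tv j (τ j) ∈ H) (hPi : HTModels H Θ (PiTheory lam P))
    (hPsi : HTModels H Θ (psiTheory lam (τ (lam - 1)) P)) (hr : .nxt I a b ∈ P)
    (hb : HSat H Θ (sigBody lam k b)) :
    k + 1 < lam ∧ XA.av a (k + 1) ∈ H ∧ I.mem (τ (k + 1) - τ k) := by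
  have hhead := (hPi _ ⟨_, hr, k, hk, rfl⟩).1 hb
  by_cases hlast : k = lam - 1
  · rw [if_pos hlast] at hhead
    exact hhead.elim
  rw [if_neg hlast] at hhead
  have hk1 : k + 1 < lam := by omega
  refine ⟨hk1, hhead, ?_⟩
  by_contra hI
  exact (hPsi _ ⟨I, a, b, hr, k, τ k, τ (k + 1), hk1, hτ.2 k hk1, hτ.le_last hk1,
    (Interval.not_mem_iff _ _).1 hI, rfl⟩).1 ⟨hb, htv k hk, htv (k + 1) hk1⟩

theorem mhtModels_avTrace {H : Set (XA α)} (hτ : IsTiming lam τ)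
    (hM : MHTModels lam τ T T (PlainRule.mf '' P)) (htv : ∀ k < lam, XA.tv k (τ k) ∈ H)
    (hPi : HTModels H (thetaHT lam τ T) (PiTheory lam P))
    (hPsi : HTModels H (thetaHT lam τ T) (psiTheory lam (τ (lam - 1)) P)) :
    MHTModels lam τ (avTrace H) T (PlainRule.mf '' P) := by
  rintro _ ⟨r, hr, rfl⟩
  cases r with
  | basic h b =>
    exact msat_always_fullInterval.2 fun k hk =>
      (msat_basic_iff hk (fun _ => Iff.rfl) (mem_iff_av_mem_thetaHT hk) h b).2
        (hPi _ ⟨_, hr, k, hk, rfl⟩)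
  | nxt I a b =>
    refine msat_always_fullInterval.2 fun k hk =>
      ⟨fun hb => ?_, (msat_always_fullInterval.1 (hM _ ⟨_, hr, rfl⟩) k hk).2⟩
    exact next_of_hsat_sigBody hτ hk htv hPi hPsi hr
      ((msat_bodyMF_iff hk (fun _ => Iff.rfl) (mem_iff_av_mem_thetaHT hk) b).1 hb)

end Equilibrium

theorem stmt0 {α : Type} (lam : ℕ) (hlam : 1 ≤ lam)
    (τ : ℕ → ℕ) (hτ : IsTiming lam τ)
    (T : ℕ → Set α) (P : Set (PlainRule α))
    (hM : MetricEqModel lam τ T (PlainRule.mf '' P)) :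
    EqModel (thetaHT lam τ T)
      (PiTheory lam P ∪ deltaTheory α lam (τ (lam - 1)) ∪
        psiTheory lam (τ (lam - 1)) P) := by
  refine ⟨?_, fun H hH hmod => ?_⟩
  · rintro φ ((hφ | hφ) | hφ)
    exacts [htModels_piTheory hM.1 φ hφ, htModels_deltaTheory hlam hτ φ hφ,
      htModels_psiTheory _ hM.1 φ hφ]
  · have htv := tv_mem_of_htModels_deltaTheory hτ hH.subset fun φ hφ => hmod φ (.inl (.inr hφ))
    exact hM.2 (avTrace H) (isTrace_avTrace hH.subset) (exists_avTrace_ne hH htv)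
      (mhtModels_avTrace hτ hM.1 htv (fun φ hφ => hmod φ (.inl (.inl hφ)))
        fun φ hφ => hmod φ (.inr hφ))

end MetricASP
end

section
/- Let λ ≥ 1 and ν ∈ ℕ. If ⟨T,T⟩ is an equilibrium model of Δ_{λ,ν}, then ⟨T,T⟩ is timed wrt λ, i.e., there exists a timing function τ wrt λ such that for all 0 ≤ k < λ and d ∈ ℕ: ⟨T,T⟩ ⊨ t_{k,d} iff τ(k) = d. -/
namespace MetricASP

/-- `Δ_{λ,ν}` over an alphabet `β` containing the atoms `t_{k,d}` given by `tv`. -/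
def deltaG {β : Type} (tv : ℕ → ℕ → β) (lam ν : ℕ) : Set (PF β) :=
  insert (PF.atom (tv 0 0))
    {φ | ∃ k d, k + 1 < lam ∧ d ≤ ν ∧
      φ = PF.imp (.atom (tv k d))
        (bigOr (((List.range (ν + 1)).filter (fun d' => decide (d < d'))).map
          (fun d' => PF.atom (tv (k + 1) d'))))}


lemma HSat_bigOr {β : Type} (H T : Set β) (l : List (PF β)) :
    HSat H T (bigOr l) ↔ ∃ φ ∈ l, HSat H T φ := by
  induction l with
  | nil => simp [bigOr, HSat]
  | cons a l ih =>
    simp only [bigOr, List.foldr] at *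
    simp [HSat, ih]

open Classical in
noncomputable def tau {β : Type} (tv : ℕ → ℕ → β) (ν : ℕ) (T : Set β) : ℕ → ℕ
  | 0 => 0
  | k + 1 =>
    if h : ∃ d', tau tv ν T k < d' ∧ d' ≤ ν ∧ tv (k + 1) d' ∈ T
      then h.choose else tau tv ν T k + 1

theorem stmt9 {β : Type} (tv : ℕ → ℕ → β)
    (htv : ∀ k d k' d', tv k d = tv k' d' → k = k' ∧ d = d')
    (lam : ℕ) (hlam : 1 ≤ lam) (ν : ℕ) (T : Set β)
    (hEq : EqModel T (deltaG tv lam ν)) :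
    ∃ τ : ℕ → ℕ, IsTiming lam τ ∧
      ∀ k, k < lam → ∀ d, (tv k d ∈ T ↔ τ k = d) := by
  classical
  set τ := tau tv ν T with hτ
  have hT := hEq.1
  have h00 : tv 0 0 ∈ T := hT _ (Set.mem_insert _ _)
  have hτ0 : τ 0 = 0 := rfl
  -- the step lemma
  have step : ∀ k, k + 1 < lam → tv k (τ k) ∈ T → τ k ≤ ν →
      τ k < τ (k + 1) ∧ τ (k + 1) ≤ ν ∧ tv (k + 1) (τ (k + 1)) ∈ T := by
    intro k hk1 hkT hkν
    have hrule : PF.imp (.atom (tv k (τ k)))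
        (bigOr (((List.range (ν + 1)).filter (fun d' => decide (τ k < d'))).map
          (fun d' => PF.atom (tv (k + 1) d')))) ∈ deltaG tv lam ν :=
      Set.mem_insert_of_mem _ ⟨k, τ k, hk1, hkν, rfl⟩
    have hhead := (hT _ hrule).2 hkT
    obtain ⟨φ, hφl, hφ⟩ := (HSat_bigOr T T _).1 hhead
    obtain ⟨d', hd', rfl⟩ := List.mem_map.1 hφl
    simp only [List.mem_filter, List.mem_range, decide_eq_true_eq] at hd'
    have hex : ∃ d', τ k < d' ∧ d' ≤ ν ∧ tv (k + 1) d' ∈ T :=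
      ⟨d', hd'.2, Nat.lt_succ_iff.1 hd'.1, hφ⟩
    have hτs : τ (k + 1) = hex.choose := by
      show tau tv ν T (k + 1) = hex.choose
      rw [tau, dif_pos hex]
    obtain ⟨h1, h2, h3⟩ := hex.choose_spec
    rw [hτs]
    exact ⟨h1, h2, h3⟩
  -- invariant
  have inv : ∀ k, k < lam → tv k (τ k) ∈ T ∧ τ k ≤ ν := by
    intro k
    induction k with
    | zero => intro _; exact ⟨h00, Nat.zero_le _⟩
    | succ k ih =>
      intro hk1
      obtain ⟨hkT, hkν⟩ := ih (Nat.lt_of_succ_lt hk1)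
      obtain ⟨_, h2, h3⟩ := step k hk1 hkT hkν
      exact ⟨h3, h2⟩
  -- the candidate smaller model
  set H : Set β := {x | ∃ k, k < lam ∧ x = tv k (τ k)} with hH
  have hsub : H ⊆ T := by
    rintro x ⟨k, hk, rfl⟩
    exact (inv k hk).1
  have hHmod : HTModels H T (deltaG tv lam ν) := by
    intro φ hφ
    rcases hφ with hφ | ⟨k, d, hk1, hdν, rfl⟩
    · subst hφ
      show tv 0 0 ∈ H
      exact ⟨0, hlam, rfl⟩
    · refine ⟨?_, (hT _ (Set.mem_insert_of_mem _ ⟨k, d, hk1, hdν, rfl⟩)).2⟩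
      rintro ⟨k', hk', hkk'⟩
      obtain ⟨hk, hd⟩ := htv _ _ _ _ hkk'
      subst hk
      obtain ⟨h1, h2, h3⟩ := step k hk1 (inv k hk').1 (inv k hk').2
      refine (HSat_bigOr H T _).2 ⟨PF.atom (tv (k + 1) (τ (k + 1))), ?_, ?_⟩
      · exact List.mem_map.2 ⟨τ (k + 1), by
          simp only [List.mem_filter, List.mem_range, decide_eq_true_eq]
          exact ⟨Nat.lt_succ_of_le h2, hd ▸ h1⟩, rfl⟩
      · exact ⟨k + 1, hk1, rfl⟩
  have hHT : H = T := by
    by_contra hne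
    exact hEq.2 H (Set.ssubset_iff_subset_ne.2 ⟨hsub, hne⟩) hHmod
  refine ⟨τ, ⟨hτ0, fun k hk1 => (step k hk1 (inv k (Nat.lt_of_succ_lt hk1)).1
      (inv k (Nat.lt_of_succ_lt hk1)).2).1⟩, ?_⟩
  intro k hk d
  rw [← hHT]
  constructor
  · rintro ⟨k', hk', hkk'⟩
    obtain ⟨hk, hd⟩ := htv _ _ _ _ hkk'
    subst hk
    exact hd.symm
  · rintro rfl
    exact ⟨k, hk, rfl⟩

end MetricASP
end

section
/- Let λ ∈ ℕ and let ⟨h,t⟩ be an HTc-interpretation. If ⟨h,t⟩ is an HTc-model of Δ^c_λ, then ⟨h,t⟩ is timed wrt λ, i.e., there is a timing function τ wrt λ with h(t_k) = τ(k) and t(t_k) = τ(k) for all 0 ≤ k < λ. -/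
namespace MetricASP

/-- Domain values: the Boolean truth value `𝐭` and the natural numbers. -/
inductive DVal : Type
  | tt
  | num (n : ℕ)

/-- Valuations: partial functions from variables to domain values. -/
def Valu (χ : Type) : Type := χ → Option DVal

/-- Graph inclusion of valuations. -/
def Valu.le {χ : Type} (v w : Valu χ) : Prop :=
  ∀ x d, v x = some d → w x = some d

/-- HTc satisfaction of constraint formulas, for a given denotation of atoms. -/
def CSat {χ κ : Type} (den : κ → Valu χ → Prop) :
    Valu χ → Valu χ → PF κ → Prop
  | _, _, .fls => False
  | h, _, .atom c => den c h
  | h, t, .and φ ψ => CSat den h t φ ∧ CSat den h t ψ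
  | h, t, .or φ ψ => CSat den h t φ ∨ CSat den h t ψ
  | h, t, .imp φ ψ =>
      (CSat den h t φ → CSat den h t ψ) ∧ (CSat den t t φ → CSat den t t ψ)

def CModels {χ κ : Type} (den : κ → Valu χ → Prop) (h t : Valu χ)
    (Γ : Set (PF κ)) : Prop :=
  ∀ φ ∈ Γ, CSat den h t φ

/-- `t` (as the total HTc-interpretation `⟨t,t⟩`) is a constraint equilibrium model. -/
def CEqModel {χ κ : Type} (den : κ → Valu χ → Prop) (t : Valu χ)
    (Γ : Set (PF κ)) : Prop :=
  CModels den t t Γ ∧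
  ∀ h : Valu χ, Valu.le h t → h ≠ t → ¬ CModels den h t Γ

/-- Constraint atoms over a variable type `χ`: `x = d` and `x − y ≤ d`. -/
inductive SAt (χ : Type) : Type
  | eqN (x : χ) (d : ℕ)
  | diff (x y : χ) (d : ℤ)

/-- Denotation of constraint atoms. -/
def SAt.den {χ : Type} : SAt χ → Valu χ → Prop
  | .eqN x d, v => v x = some (.num d)
  | .diff x y d, v => ∃ a b : ℕ,
      v x = some (.num a) ∧ v y = some (.num b) ∧ (a : ℤ) - (b : ℤ) ≤ d

/-- `Δ^c_λ`, over variables containing the integer variables `tvar k`. -/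
def deltaS {χ : Type} (tvar : ℕ → χ) (lam : ℕ) : Set (PF (SAt χ)) :=
  insert (PF.atom (SAt.eqN (tvar 0) 0))
    {φ | ∃ k, k + 1 < lam ∧ φ = PF.atom (SAt.diff (tvar k) (tvar (k + 1)) (-1))}

/-- `⟨h,t⟩` is timed wrt `lam` with induced timing function `τ`. -/
def TimedC {χ : Type} (tvar : ℕ → χ) (lam : ℕ) (h t : Valu χ) (τ : ℕ → ℕ) : Prop :=
  IsTiming lam τ ∧
  ∀ k, k < lam → h (tvar k) = some (.num (τ k)) ∧ t (tvar k) = some (.num (τ k))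


theorem stmt12 {χ : Type} (tvar : ℕ → χ) (htv : Function.Injective tvar)
    (lam : ℕ) (h t : Valu χ) (hle : Valu.le h t)
    (hmod : CModels SAt.den h t (deltaS tvar lam)) :
    ∃ τ : ℕ → ℕ, TimedC tvar lam h t τ := by
  classical
  rcases Nat.eq_zero_or_pos lam with hl0 | hlpos
  · exact ⟨fun _ => 0, ⟨rfl, by omega⟩, by omega⟩
  have h0 : h (tvar 0) = some (.num 0) := by
    have := hmod _ (Set.mem_insert _ _)
    simpa [CSat, SAt.den] using this
  have hdiff : ∀ k, k + 1 < lam → ∃ a b : ℕ,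
      h (tvar k) = some (.num a) ∧ h (tvar (k + 1)) = some (.num b) ∧
      (a : ℤ) - (b : ℤ) ≤ -1 := by
    intro k hk
    have := hmod _ (Set.mem_insert_of_mem _ ⟨k, hk, rfl⟩)
    simpa [CSat, SAt.den] using this
  have hval : ∀ k, k < lam → ∃ n, h (tvar k) = some (.num n) := by
    intro k hk
    rcases Nat.lt_or_ge (k + 1) lam with h1 | h1
    · obtain ⟨a, _, ha, _, _⟩ := hdiff k h1; exact ⟨a, ha⟩
    · match k with
      | 0 => exact ⟨0, h0⟩
      | m + 1 =>
        obtain ⟨_, b, _, hb, _⟩ := hdiff m hk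
        exact ⟨b, hb⟩
  let τ : ℕ → ℕ := fun k =>
    match h (tvar k) with
    | some (.num n) => n
    | _ => 0
  have hτ : ∀ k, k < lam → h (tvar k) = some (.num (τ k)) := by
    intro k hk
    obtain ⟨n, hn⟩ := hval k hk
    simp only [τ, hn]
  refine ⟨τ, ⟨?_, ?_⟩, ?_⟩
  · have := hτ 0 hlpos
    rw [h0] at this
    injection this with h'
    injection h' with h''
    omega
  · intro k hk
    obtain ⟨a, b, ha, hb, hab⟩ := hdiff k hk
    have h1 := hτ k (by omega)
    have h2 := hτ (k + 1) hk
    rw [ha] at h1; rw [hb] at h2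
    injection h1 with h1; injection h1 with h1
    injection h2 with h2; injection h2 with h2
    omega
  · intro k hk
    exact ⟨hτ k hk, hle _ _ (hτ k hk)⟩

end MetricASP
end

section
/- For every metric formula φ over alphabet 𝒜, every interval I, every timed HT-trace M of length λ and every 0 ≤ k < λ: (1) M,k ⊨ ◇_I ¬φ if and only if M,k ⊨ ¬□_I φ; (2) M,k ⊨ □_I ¬φ if and only if M,k ⊨ ¬◇_I φ; (3) M,k ⊨ ◯_I ¬φ if and only if M,k ⊨ ◯_I ⊤ ∧ ¬◯_I φ. -/
namespace MetricASP

lemma persistence {α : Type} (lam : ℕ) (τ : ℕ → ℕ) (H T : ℕ → Set α)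
    (hTr : IsTrace lam H T) (φ : MF α) :
    ∀ k, k < lam → MSat lam τ H T k φ → MSat lam τ T T k φ := by
  induction φ with
  | fls => intro k _ h; exact h
  | atom a => intro k hk h; exact hTr k hk h
  | conj φ ψ ihφ ihψ =>
      intro k hk h; exact ⟨ihφ k hk h.1, ihψ k hk h.2⟩
  | disj φ ψ ihφ ihψ =>
      intro k hk h; exact h.elim (fun h => Or.inl (ihφ k hk h)) (fun h => Or.inr (ihψ k hk h))
  | impl φ ψ _ _ =>
      intro k _ h; exact ⟨h.2, h.2⟩
  | init => intro k _ h; exact h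
  | next I φ ih =>
      intro k _ h; exact ⟨h.1, ih (k+1) h.1 h.2.1, h.2.2⟩
  | always I φ ih =>
      intro k _ h i hki hi hm; exact ih i hi (h i hki hi hm)
  | evt I φ ih =>
      intro k _ h
      obtain ⟨i, hki, hi, hm, hs⟩ := h
      exact ⟨i, hki, hi, hm, ih i hi hs⟩

theorem stmt14 {α : Type} (lam : ℕ) (τ : ℕ → ℕ) (hτ : IsTiming lam τ)
    (H T : ℕ → Set α) (hTr : IsTrace lam H T)
    (φ : MF α) (I : Interval) (k : ℕ) (hk : k < lam) :
    (MSat lam τ H T k (.evt I (MF.neg φ)) ↔ MSat lam τ H T k (MF.neg (.always I φ))) ∧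
    (MSat lam τ H T k (.always I (MF.neg φ)) ↔ MSat lam τ H T k (MF.neg (.evt I φ))) ∧
    (MSat lam τ H T k (.next I (MF.neg φ)) ↔
      MSat lam τ H T k (.conj (.next I MF.top) (MF.neg (.next I φ)))) := by
  have per := persistence lam τ H T hTr φ
  refine ⟨?_, ?_, ?_⟩
  · -- ◇¬φ ↔ ¬□φ
    constructor
    · rintro ⟨i, hki, hi, hm, hnH, hnT⟩
      constructor
      · intro hall; exact hnH (hall i hki hi hm)
      · intro hall; exact hnT (hall i hki hi hm)
    · rintro ⟨_, hnT⟩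
      by_contra hno
      apply hnT
      intro i hki hi hm
      by_contra hTi
      exact hno ⟨i, hki, hi, hm, fun hH => hTi (per i hi hH), hTi⟩
  · -- □¬φ ↔ ¬◇φ
    constructor
    · intro hall
      constructor
      · rintro ⟨i, hki, hi, hm, hs⟩; exact (hall i hki hi hm).1 hs
      · rintro ⟨i, hki, hi, hm, hs⟩; exact (hall i hki hi hm).2 hs
    · rintro ⟨_, hevT⟩ i hki hi hm
      refine ⟨fun hH => hevT ⟨i, hki, hi, hm, per i hi hH⟩,
              fun hT => hevT ⟨i, hki, hi, hm, hT⟩⟩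
  · -- ◯¬φ ↔ ◯⊤ ∧ ¬◯φ
    constructor
    · rintro ⟨hlt, ⟨hnH, hnT⟩, hm⟩
      refine ⟨⟨hlt, ⟨fun h => h.elim, fun h => h.elim⟩, hm⟩, ?_, ?_⟩
      · rintro ⟨_, hs, _⟩; exact hnH hs
      · rintro ⟨_, hs, _⟩; exact hnT hs
    · rintro ⟨⟨hlt, _, hm⟩, _, hnT⟩
      have hT : ¬ MSat lam τ T T (k+1) φ := fun h => hnT ⟨hlt, h, hm⟩
      exact ⟨hlt, ⟨fun hH => hT (per (k+1) hlt hH), hT⟩, hm⟩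

end MetricASP
end

section
/- Let ⟨H,T⟩ be an HT-interpretation over 𝒜 and m a three-valued interpretation over 𝒜 such that ⟨H,T⟩ and m correspond. Then for every propositional formula φ over 𝒜: m(φ) = 2 if and only if ⟨H,T⟩ ⊨ φ, and m(φ) > 0 if and only if ⟨T,T⟩ ⊨ φ. -/
namespace MetricASP

/-- Extension of a three-valued interpretation to propositional formulas. -/
def tval {α : Type} (m : α → Fin 3) : PF α → Fin 3
  | .fls => 0
  | .atom a => m a
  | .and φ ψ => min (tval m φ) (tval m ψ)
  | .or φ ψ => max (tval m φ) (tval m ψ)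
  | .imp φ ψ => if tval m φ ≤ tval m ψ then 2 else tval m ψ


theorem stmt15 {α : Type} (H T : Set α) (hHT : H ⊆ T) (m : α → Fin 3)
    (hcorr : ∀ a : α,
      (a ∉ T → m a = 0) ∧ (a ∈ T ∧ a ∉ H → m a = 1) ∧ (a ∈ H → m a = 2)) :
    ∀ φ : PF α, (tval m φ = 2 ↔ HSat H T φ) ∧ ((0 : Fin 3) < tval m φ ↔ HSat T T φ) := by
  intro φ
  induction φ with
  | fls =>
    refine ⟨⟨fun h => ?_, fun h => h.elim⟩, fun h => ?_, fun h => h.elim⟩ <;>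
      simp [tval] at h
  | atom a =>
    obtain ⟨h0, h1, h2⟩ := hcorr a
    by_cases hH : a ∈ H
    · simp [tval, HSat, h2 hH, hH, hHT hH]
    · by_cases hT : a ∈ T
      · simp [tval, HSat, h1 ⟨hT, hH⟩, hH, hT]
      · simp [tval, HSat, h0 hT, hH, hT]
  | and φ ψ ihφ ihψ =>
    obtain ⟨p1, p2⟩ := ihφ; obtain ⟨q1, q2⟩ := ihψ
    simp only [tval, HSat, ← p1, ← p2, ← q1, ← q2]
    generalize tval m φ = a; generalize tval m ψ = b
    revert a b; decide
  | or φ ψ ihφ ihψ =>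
    obtain ⟨p1, p2⟩ := ihφ; obtain ⟨q1, q2⟩ := ihψ
    simp only [tval, HSat, ← p1, ← p2, ← q1, ← q2]
    generalize tval m φ = a; generalize tval m ψ = b
    revert a b; decide
  | imp φ ψ ihφ ihψ =>
    obtain ⟨p1, p2⟩ := ihφ; obtain ⟨q1, q2⟩ := ihψ
    simp only [tval, HSat, ← p1, ← p2, ← q1, ← q2]
    generalize tval m φ = a; generalize tval m ψ = b
    revert a b; decide

end MetricASP
end

section
/- Let M = ((⟨H_k,T_k⟩)_{0≤k<λ}, τ) be a timed HT-trace of length λ over 𝒜 and let m be a three-valued metric interpretation over 𝒜 wrt λ such that M and m correspond. Then for every metric formula φ over 𝒜 and every 0 ≤ k < λ: m_k(φ) = 2 if and only if M,k ⊨ φ, and m_k(φ) > 0 if and only if ((⟨T_k,T_k⟩)_{0≤k<λ}, τ), k ⊨ φ. -/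
namespace MetricASP

-- Extension of a three-valued metric interpretation to metric formulas.
open Classical in
noncomputable def mval {α : Type} (lam : ℕ) (τ : ℕ → ℕ) (m : ℕ → α → Fin 3) :
    ℕ → MF α → Fin 3
  | _, .fls => 0
  | k, .atom a => m k a
  | k, .conj φ ψ => min (mval lam τ m k φ) (mval lam τ m k ψ)
  | k, .disj φ ψ => max (mval lam τ m k φ) (mval lam τ m k ψ)
  | k, .impl φ ψ =>
      if mval lam τ m k φ ≤ mval lam τ m k ψ then 2 else mval lam τ m k ψ
  | k, .init => if k = 0 then 2 else 0
  | k, .next I φ =>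
      if k + 1 = lam ∨ ¬ I.mem (τ (k + 1) - τ k) then 0 else mval lam τ m (k + 1) φ
  | k, .evt I φ =>
      ((List.range' k (lam - k)).map
        (fun j => if I.mem (τ j - τ k) then mval lam τ m j φ else 0)).foldr max 0
  | k, .always I φ =>
      ((List.range' k (lam - k)).map
        (fun j => if I.mem (τ j - τ k) then mval lam τ m j φ else 2)).foldr min 2



private lemma fmax2 : ∀ a b : Fin 3, max a b = 2 ↔ a = 2 ∨ b = 2 := by decide
private lemma fmaxpos : ∀ a b : Fin 3, 0 < max a b ↔ 0 < a ∨ 0 < b := by decide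
private lemma fmin2 : ∀ a b : Fin 3, min a b = 2 ↔ a = 2 ∧ b = 2 := by decide
private lemma fminpos : ∀ a b : Fin 3, 0 < min a b ↔ 0 < a ∧ 0 < b := by decide

private lemma foldr_max_eq_two (l : List (Fin 3)) :
    l.foldr max 0 = 2 ↔ ∃ x ∈ l, x = 2 := by
  induction l with
  | nil => simp
  | cons a l ih => simp [List.foldr_cons, fmax2, ih, eq_comm]

private lemma foldr_max_pos (l : List (Fin 3)) :
    0 < l.foldr max 0 ↔ ∃ x ∈ l, 0 < x := by
  induction l with
  | nil => simp
  | cons a l ih => simp [List.foldr_cons, fmaxpos, ih]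

private lemma foldr_min_eq_two (l : List (Fin 3)) :
    l.foldr min 2 = 2 ↔ ∀ x ∈ l, x = 2 := by
  induction l with
  | nil => simp
  | cons a l ih => simp [List.foldr_cons, fmin2, ih]

private lemma foldr_min_pos (l : List (Fin 3)) :
    0 < l.foldr min 2 ↔ ∀ x ∈ l, 0 < x := by
  induction l with
  | nil => simp
  | cons a l ih => simp [List.foldr_cons, fminpos, ih]

theorem stmt16 {α : Type} (lam : ℕ) (τ : ℕ → ℕ) (hτ : IsTiming lam τ)
    (H T : ℕ → Set α) (hTr : IsTrace lam H T)
    (m : ℕ → α → Fin 3)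
    (hcorr : ∀ k, k < lam → ∀ a : α,
      (a ∉ T k → m k a = 0) ∧ (a ∈ T k ∧ a ∉ H k → m k a = 1) ∧ (a ∈ H k → m k a = 2)) :
    ∀ (φ : MF α) (k : ℕ), k < lam →
      (mval lam τ m k φ = 2 ↔ MSat lam τ H T k φ) ∧
      ((0 : Fin 3) < mval lam τ m k φ ↔ MSat lam τ T T k φ) := by
  intro φ
  induction φ with
  | fls => intro k hk; simp [mval, MSat]
  | atom a =>
    intro k hk
    obtain ⟨h0, h1, h2⟩ := hcorr k hk a
    by_cases hT : a ∈ T k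
    · by_cases hH : a ∈ H k
      · simp [mval, MSat, h2 hH, hT, hH]
      · simp [mval, MSat, h1 ⟨hT, hH⟩, hT, hH]
    · have hH : a ∉ H k := fun h => hT (hTr k hk h)
      simp [mval, MSat, h0 hT, hT, hH]
  | conj φ ψ ih1 ih2 =>
    intro k hk
    obtain ⟨a1, a2⟩ := ih1 k hk
    obtain ⟨b1, b2⟩ := ih2 k hk
    simp [mval, MSat, fmin2, fminpos, a1, a2, b1, b2]
  | disj φ ψ ih1 ih2 =>
    intro k hk
    obtain ⟨a1, a2⟩ := ih1 k hk
    obtain ⟨b1, b2⟩ := ih2 k hk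
    simp [mval, MSat, fmax2, fmaxpos, a1, a2, b1, b2]
  | impl φ ψ ih1 ih2 =>
    intro k hk
    obtain ⟨a1, a2⟩ := ih1 k hk
    obtain ⟨b1, b2⟩ := ih2 k hk
    simp only [mval, MSat]
    generalize mval lam τ m k φ = p at a1 a2
    generalize mval lam τ m k ψ = q at b1 b2
    fin_cases p <;> fin_cases q <;> simp_all <;> tauto
  | init =>
    intro k hk
    by_cases h : k = 0 <;> simp [mval, MSat, h] <;> decide
  | next I φ ih =>
    intro k hk
    by_cases hc : k + 1 = lam ∨ ¬ I.mem (τ (k + 1) - τ k)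
    · have : ¬ (k + 1 < lam ∧ MSat lam τ H T (k+1) φ ∧ I.mem (τ (k + 1) - τ k)) := by
        rintro ⟨hl, _, hm⟩
        rcases hc with hc | hc
        · omega
        · exact hc hm
      have h2 : ¬ (k + 1 < lam ∧ MSat lam τ T T (k+1) φ ∧ I.mem (τ (k + 1) - τ k)) := by
        rintro ⟨hl, _, hm⟩
        rcases hc with hc | hc
        · omega
        · exact hc hm
      simp [mval, MSat, hc, this, h2]
    · push_neg at hc
      obtain ⟨hne, hmem⟩ := hc
      have hlt : k + 1 < lam := by omega
      obtain ⟨a1, a2⟩ := ih (k + 1) hlt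
      simp [mval, MSat, hne, hmem, hlt, a1, a2]
  | evt I φ ih =>
    intro k hk
    simp only [mval, MSat, foldr_max_eq_two, foldr_max_pos, List.mem_map,
      List.mem_range'_1]
    have hkl : k + (lam - k) = lam := by omega
    constructor
    · constructor
      · rintro ⟨x, ⟨j, ⟨hj1, hj2⟩, rfl⟩, hx⟩
        have hjl : j < lam := by omega
        by_cases hm : I.mem (τ j - τ k)
        · exact ⟨j, hj1, hjl, hm, ((ih j hjl).1).mp (by simpa [hm] using hx)⟩
        · simp [hm] at hx
      · rintro ⟨j, hj1, hj2, hm, hs⟩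
        exact ⟨_, ⟨j, ⟨hj1, by omega⟩, rfl⟩, by simp [hm, ((ih j hj2).1).mpr hs]⟩
    · constructor
      · rintro ⟨x, ⟨j, ⟨hj1, hj2⟩, rfl⟩, hx⟩
        have hjl : j < lam := by omega
        by_cases hm : I.mem (τ j - τ k)
        · exact ⟨j, hj1, hjl, hm, ((ih j hjl).2).mp (by simpa [hm] using hx)⟩
        · simp [hm] at hx
      · rintro ⟨j, hj1, hj2, hm, hs⟩
        exact ⟨_, ⟨j, ⟨hj1, by omega⟩, rfl⟩, by simp [hm, ((ih j hj2).2).mpr hs]⟩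
  | always I φ ih =>
    intro k hk
    simp only [mval, MSat, foldr_min_eq_two, foldr_min_pos, List.mem_map,
      List.mem_range'_1]
    constructor
    · constructor
      · rintro h j hj1 hj2 hm
        exact ((ih j hj2).1).mp (by simpa [hm] using h _ ⟨j, ⟨hj1, by omega⟩, rfl⟩)
      · rintro h x ⟨j, ⟨hj1, hj2⟩, rfl⟩
        have hjl : j < lam := by omega
        by_cases hm : I.mem (τ j - τ k)
        · simp [hm, ((ih j hjl).1).mpr (h j hj1 hjl hm)]
        · simp [hm]
    · constructor
      · rintro h j hj1 hj2 hm
        exact ((ih j hj2).2).mp (by simpa [hm] using h _ ⟨j, ⟨hj1, by omega⟩, rfl⟩)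
      · rintro h x ⟨j, ⟨hj1, hj2⟩, rfl⟩
        have hjl : j < lam := by omega
        by_cases hm : I.mem (τ j - τ k)
        · simp [hm, ((ih j hjl).2).mpr (h j hj1 hjl hm)]
        · simp [hm]


end MetricASP
end

section
/- Let φ be a metric formula over 𝒜 in the plain-rule fragment, i.e., built by the grammar φ ::= ⊥ | ⊤ | a | 𝗜 | 𝗙 | ◯_{[0..ω)} a | ¬φ | φ∧φ | φ∨φ | (φ ← φ) with a ∈ 𝒜 (so the only temporal operator is the next operator with interval [0..ω), applied to atoms). Let λ ∈ ℕ and let ⟨H,T⟩ be an HT-interpretation over 𝒜*. If ⟨H,T⟩ ⊨ σ_k(φ) for every 0 ≤ k < λ, then for every timing function τ wrt λ and every 0 ≤ k < λ it holds that (tr(⟨H,T⟩), τ), k ⊨ φ, where tr(⟨H,T⟩) := (⟨{a ∈ 𝒜 | a_k ∈ H}, {a ∈ 𝒜 | a_k ∈ T}⟩)_{0≤k<λ}. -/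
namespace MetricASP

/-- The plain-rule fragment of metric formulas:
`φ ::= ⊥ | ⊤ | a | 𝗜 | 𝗙 | ◯_{[0..ω)} a | ¬φ | φ∧φ | φ∨φ | (φ ← φ)`. -/
inductive PlainF (α : Type) : Type
  | fls
  | top
  | atom (a : α)
  | init
  | fin
  | next (a : α)
  | neg (φ : PlainF α)
  | conj (φ ψ : PlainF α)
  | disj (φ ψ : PlainF α)
  | larr (φ ψ : PlainF α)

/-- The metric formula denoted by a plain-fragment formula. -/
def PlainF.mf {α : Type} : PlainF α → MF α
  | .fls => .fls
  | .top => MF.top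
  | .atom a => .atom a
  | .init => .init
  | .fin => MF.fin
  | .next a => .next fullInterval (.atom a)
  | .neg φ => MF.neg φ.mf
  | .conj φ ψ => .conj φ.mf ψ.mf
  | .disj φ ψ => .disj φ.mf ψ.mf
  | .larr φ ψ => .impl ψ.mf φ.mf

/-- The translation `σ_k` on plain-fragment formulas. -/
def PlainF.sig {α : Type} (lam k : ℕ) : PlainF α → PF (XA α)
  | .fls => .fls
  | .top => PF.top
  | .atom a => .atom (.av a k)
  | .init => if k = 0 then PF.top else .fls
  | .fin => if k = lam - 1 then PF.top else .fls
  | .next a => if k = lam - 1 then .fls else .atom (.av a (k + 1))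
  | .neg φ => PF.neg (φ.sig lam k)
  | .conj φ ψ => .and (φ.sig lam k) (ψ.sig lam k)
  | .disj φ ψ => .or (φ.sig lam k) (ψ.sig lam k)
  | .larr φ ψ => .imp (ψ.sig lam k) (φ.sig lam k)


lemma plainF_main {α : Type} (lam : ℕ) (τ : ℕ → ℕ) :
    ∀ (φ : PlainF α) (H T : Set (XA α)) (k : ℕ), k < lam →
      (MSat lam τ (fun i => {a | XA.av a i ∈ H}) (fun i => {a | XA.av a i ∈ T}) k φ.mf ↔
        HSat H T (φ.sig lam k)) := by
  intro φ
  induction φ with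
  | fls =>
    intro H T k hk
    simp [PlainF.mf, PlainF.sig, MSat, HSat]
  | top =>
    intro H T k hk
    simp [PlainF.mf, PlainF.sig, MF.top, MF.neg, PF.top, PF.neg, MSat, HSat]
  | atom a =>
    intro H T k hk
    simp [PlainF.mf, PlainF.sig, MSat, HSat]
  | init =>
    intro H T k hk
    by_cases h0 : k = 0 <;>
      simp [PlainF.mf, PlainF.sig, MSat, HSat, h0, PF.top, PF.neg]
  | fin =>
    intro H T k hk
    have hiff : (k + 1 < lam) ↔ ¬ (k = lam - 1) := by omega
    by_cases h0 : k = lam - 1 <;>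
      simp [PlainF.mf, PlainF.sig, MF.fin, MF.neg, MF.top, MSat, HSat, PF.top, PF.neg,
        Interval.mem, fullInterval, h0] <;> omega
  | next a =>
    intro H T k hk
    have hfull : (fullInterval).mem (τ (k + 1) - τ k) := by
      constructor
      · exact Nat.zero_le _
      · intro nn hnn; cases hnn
    by_cases h0 : k = lam - 1
    · subst h0
      have h2 : ¬ (lam - 1 + 1 < lam) := by omega
      simp [PlainF.mf, PlainF.sig, MSat, HSat, h2]
    · have : k + 1 < lam := by omega
      simp [PlainF.mf, PlainF.sig, MSat, HSat, h0, this, hfull]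
  | neg φ ih =>
    intro H T k hk
    have h1 := ih H T k hk
    have h2 := ih T T k hk
    simp only [PlainF.mf, PlainF.sig, MF.neg, PF.neg, MSat, HSat] at *
    tauto
  | conj φ ψ ihφ ihψ =>
    intro H T k hk
    have := ihφ H T k hk
    have := ihψ H T k hk
    simp only [PlainF.mf, PlainF.sig, MSat, HSat] at *
    tauto
  | disj φ ψ ihφ ihψ =>
    intro H T k hk
    have := ihφ H T k hk
    have := ihψ H T k hk
    simp only [PlainF.mf, PlainF.sig, MSat, HSat] at *
    tauto
  | larr φ ψ ihφ ihψ =>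
    intro H T k hk
    have h1 := ihφ H T k hk
    have h2 := ihφ T T k hk
    have h3 := ihψ H T k hk
    have h4 := ihψ T T k hk
    simp only [PlainF.mf, PlainF.sig, MSat, HSat] at h1 h2 h3 h4 ⊢
    tauto

theorem stmt18 {α : Type} (lam : ℕ) (H T : Set (XA α)) (hHT : H ⊆ T)
    (hAlph : ∀ x ∈ T, ∃ a k, x = XA.av a k)
    (φ : PlainF α)
    (hsat : ∀ k, k < lam → HSat H T (φ.sig lam k)) :
    ∀ τ : ℕ → ℕ, IsTiming lam τ → ∀ k, k < lam →
      MSat lam τ (fun i => {a | XA.av a i ∈ H}) (fun i => {a | XA.av a i ∈ T}) k φ.mf := by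
  intro τ hτ k hk
  exact (plainF_main lam τ φ H T k hk).mpr (hsat k hk)

end MetricASP
end
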